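/- arXiv:2010.08853 — 5 statements merged into one kernel-verified Lean document; each statement's English description precedes it below -/
import Mathlib

section
/- Let n, m be positive reals and consider the hyperplane H = {(w₁, w₂, b) ∈ ℝ³ : n·w₁ + 2m·w₂ + n·b = m}. The unique point of H of minimal Euclidean norm is (m/(2n² + 4m²))·(n, 2m, n), and this point is never equal to (0, 1/2, 0). -/
/-- The unique point of minimal Euclidean norm on the hyperplane
`{(w₁,w₂,b) : n·w₁ + 2m·w₂ + n·b = m}` is `(m/(2n²+4m²))·(n, 2m, n)`,
and it is never the generalizing solution `(0, 1/2, 0)`. -/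
theorem stmt_3 (n m : ℝ) (hn : 0 < n) (hm : 0 < m) :
    let H : Set (ℝ × ℝ × ℝ) := {w | n * w.1 + 2 * m * w.2.1 + n * w.2.2 = m}
    let p : ℝ × ℝ × ℝ :=
      (m / (2 * n ^ 2 + 4 * m ^ 2) * n,
       m / (2 * n ^ 2 + 4 * m ^ 2) * (2 * m),
       m / (2 * n ^ 2 + 4 * m ^ 2) * n)
    p ∈ H ∧
    (∀ q ∈ H, q ≠ p →
      p.1 ^ 2 + p.2.1 ^ 2 + p.2.2 ^ 2 < q.1 ^ 2 + q.2.1 ^ 2 + q.2.2 ^ 2) ∧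
    p ≠ ((0 : ℝ), (1 / 2 : ℝ), (0 : ℝ)) := by
  intro H p
  have hD : (0:ℝ) < 2 * n ^ 2 + 4 * m ^ 2 := by positivity
  set c : ℝ := m / (2 * n ^ 2 + 4 * m ^ 2) with hc
  have hcD : c * (2 * n ^ 2 + 4 * m ^ 2) = m := by
    rw [hc]; field_simp
  refine ⟨?_, ?_, ?_⟩
  · show n * (c * n) + 2 * m * (c * (2 * m)) + n * (c * n) = m
    nlinarith [hcD]
  · intro q hq hqp
    have hq' : n * q.1 + 2 * m * q.2.1 + n * q.2.2 = m := hq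
    have hd : 0 < (q.1 - c * n) ^ 2 + (q.2.1 - c * (2 * m)) ^ 2
        + (q.2.2 - c * n) ^ 2 := by
      rcases lt_or_eq_of_le (by positivity :
          (0:ℝ) ≤ (q.1 - c * n) ^ 2 + (q.2.1 - c * (2 * m)) ^ 2
            + (q.2.2 - c * n) ^ 2) with h | h
      · exact h
      · exfalso
        apply hqp
        have h1 : q.1 = c * n := by nlinarith [sq_nonneg (q.1 - c * n), sq_nonneg (q.2.1 - c * (2 * m)), sq_nonneg (q.2.2 - c * n)]
        have h2 : q.2.1 = c * (2 * m) := by nlinarith [sq_nonneg (q.1 - c * n), sq_nonneg (q.2.1 - c * (2 * m)), sq_nonneg (q.2.2 - c * n)]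
        have h3 : q.2.2 = c * n := by nlinarith [sq_nonneg (q.1 - c * n), sq_nonneg (q.2.1 - c * (2 * m)), sq_nonneg (q.2.2 - c * n)]
        exact Prod.ext h1 (Prod.ext h2 h3)
    have hlin : n * (q.1 - c * n) + 2 * m * (q.2.1 - c * (2 * m))
        + n * (q.2.2 - c * n) = 0 := by nlinarith [hcD, hq']
    show (c * n) ^ 2 + (c * (2 * m)) ^ 2 + (c * n) ^ 2 <
        q.1 ^ 2 + q.2.1 ^ 2 + q.2.2 ^ 2
    nlinarith [hd, mul_eq_zero_of_right c hlin]
  · intro h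
    have h1 : c * n = 0 := congrArg Prod.fst h
    have : c * n > 0 := by positivity
    linarith
end

section
/- Let n, m be positive reals and consider the hyperplane H = {(w₁, w₂, b) ∈ ℝ³ : n·w₁ + 2m·w₂ + n·b = m}. The minimum of the L1 norm |w₁| + |w₂| + |b| over H equals m / max(n, 2m). Consequently, the point (0, 1/2, 0), which has L1 norm 1/2, achieves this minimum if and only if 2m ≥ n. -/
/-- The minimum of the L1 norm `|w₁| + |w₂| + |b|` over the hyperplane
`{(w₁,w₂,b) : n·w₁ + 2m·w₂ + n·b = m}` equals `m / max n (2m)`, and the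
generalizing solution `(0, 1/2, 0)` (of L1 norm `1/2`) achieves it
iff `2m ≥ n`. -/
theorem stmt_4 (n m : ℝ) (hn : 0 < n) (hm : 0 < m) :
    IsLeast {r : ℝ | ∃ w : ℝ × ℝ × ℝ,
        n * w.1 + 2 * m * w.2.1 + n * w.2.2 = m ∧
        r = |w.1| + |w.2.1| + |w.2.2|}
      (m / max n (2 * m)) ∧
    (((1 : ℝ) / 2 = m / max n (2 * m)) ↔ n ≤ 2 * m) := by
  set M := max n (2 * m) with hM
  have hMpos : 0 < M := lt_of_lt_of_le hn (le_max_left _ _)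
  constructor
  · constructor
    · -- membership: pick witness depending on which is max
      rcases le_total n (2 * m) with h | h
      · have : M = 2 * m := max_eq_right h
        refine ⟨(0, 1/2, 0), by ring, ?_⟩
        simp [this, abs_of_nonneg]
        rw [div_eq_iff (by linarith : (2:ℝ) * m ≠ 0)]; ring
      · have : M = n := max_eq_left h
        refine ⟨(m / n, 0, 0), ?_, ?_⟩
        · field_simp; ring
        · simp [this, abs_of_nonneg (le_of_lt (div_pos hm hn))]
    · rintro r ⟨⟨w1, w2, b⟩, heq, rfl⟩
      simp only at heq
      rw [div_le_iff₀ hMpos]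
      have h1 : n ≤ M := le_max_left _ _
      have h2 : 2 * m ≤ M := le_max_right _ _
      have hw1 : n * w1 ≤ M * |w1| := by
        calc n * w1 ≤ n * |w1| := by
              exact mul_le_mul_of_nonneg_left (le_abs_self _) hn.le
          _ ≤ M * |w1| := mul_le_mul_of_nonneg_right h1 (abs_nonneg _)
      have hw2 : 2 * m * w2 ≤ M * |w2| := by
        calc 2 * m * w2 ≤ 2 * m * |w2| :=
              mul_le_mul_of_nonneg_left (le_abs_self _) (by linarith)
          _ ≤ M * |w2| := mul_le_mul_of_nonneg_right h2 (abs_nonneg _)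
      have hw3 : n * b ≤ M * |b| := by
        calc n * b ≤ n * |b| := mul_le_mul_of_nonneg_left (le_abs_self _) hn.le
          _ ≤ M * |b| := mul_le_mul_of_nonneg_right h1 (abs_nonneg _)
      nlinarith [abs_nonneg w1, abs_nonneg w2, abs_nonneg b]
  · constructor
    · intro h
      by_contra hc
      push_neg at hc
      have : M = n := max_eq_left hc.le
      rw [this] at h
      have : m / n < 1 / 2 := by
        rw [div_lt_div_iff₀ hn (by norm_num)]; linarith
      linarith
    · intro h
      have : M = 2 * m := max_eq_right h
      rw [this, eq_div_iff (by linarith : (2:ℝ) * m ≠ 0)]; ring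
end

section
/- Fix N ∈ ℕ with N ≥ 2 and target values y₁, …, y_N ∈ ℝ. Define w₁ = (1, …, 1) ∈ ℝᴺ and b = (0, 1, …, N−1) ∈ ℝᴺ, and define w₂ ∈ ℝᴺ recursively by a₁ = y₁ and aᵢ = yᵢ − 2a_{i−1} − 3a_{i−2} − ⋯ − i·a₁ for 2 ≤ i ≤ N (i.e., aᵢ = yᵢ − Σ_{j=1}^{i−1} (i − j + 1)·a_j). Let f : ℕ → ℝ be f(n) = Σ_{i=1}^{N} aᵢ · max(n − (i−1), 0). Then f(n) = y_n for all 1 ≤ n ≤ N, and f(n) = (n − N + 1)·y_N − (n − N)·y_{N−1} for all n > N. -/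
/-- The one-hidden-layer ReLU network `f(n) = Σᵢ aᵢ · ReLU(n − (i−1))` of width
`N`, with weights `aᵢ` defined by `a₁ = y₁` and
`aᵢ = yᵢ − Σ_{j=1}^{i−1} (i − j + 1)·a_j`, memorizes `f(n) = y_n` for
`1 ≤ n ≤ N` and extrapolates linearly:
`f(n) = (n − N + 1)·y_N − (n − N)·y_{N−1}` for `n > N`. -/
theorem stmt_9 (N : ℕ) (hN : 2 ≤ N) (y : ℕ → ℝ) (a : ℕ → ℝ)
    (ha : ∀ i, 1 ≤ i → i ≤ N →
      a i = y i - ∑ j ∈ Finset.Ico 1 i, ((i : ℝ) - (j : ℝ) + 1) * a j) :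
    let f : ℕ → ℝ := fun n =>
      ∑ i ∈ Finset.Icc 1 N, a i * max ((n : ℝ) - ((i : ℝ) - 1)) 0
    (∀ n : ℕ, 1 ≤ n → n ≤ N → f n = y n) ∧
    (∀ n : ℕ, N < n →
      f n = ((n : ℝ) - (N : ℝ) + 1) * y N - ((n : ℝ) - (N : ℝ)) * y (N - 1)) := by
  intro f
  have key : ∀ n : ℕ, 1 ≤ n → n ≤ N →
      y n = ∑ i ∈ Finset.Icc 1 n, ((n : ℝ) - (i : ℝ) + 1) * a i := by
    intro n hn1 hnN
    have h := ha n hn1 hnN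
    rw [← Finset.Ico_add_one_right_eq_Icc, Finset.sum_Ico_succ_top hn1, h]
    ring
  constructor
  · intro n hn1 hnN
    have hsub : Finset.Icc 1 n ⊆ Finset.Icc 1 N := Finset.Icc_subset_Icc_right hnN
    have hzero : ∀ i ∈ Finset.Icc 1 N, i ∉ Finset.Icc 1 n →
        a i * max ((n : ℝ) - ((i : ℝ) - 1)) 0 = 0 := by
      intro i hi hni
      have h1 : 1 ≤ i := (Finset.mem_Icc.mp hi).1
      have h2 : n < i := by
        rcases Finset.mem_Icc.mp hi with ⟨_, _⟩
        by_contra hc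
        exact hni (Finset.mem_Icc.mpr ⟨h1, by omega⟩)
      have : (n : ℝ) - ((i : ℝ) - 1) ≤ 0 := by
        have : (n : ℝ) + 1 ≤ (i : ℝ) := by exact_mod_cast Nat.succ_le_of_lt h2
        linarith
      rw [max_eq_right this, mul_zero]
    show (∑ i ∈ Finset.Icc 1 N, a i * max ((n : ℝ) - ((i : ℝ) - 1)) 0) = y n
    rw [← Finset.sum_subset hsub hzero, key n hn1 hnN]
    apply Finset.sum_congr rfl
    intro i hi
    rcases Finset.mem_Icc.mp hi with ⟨hi1, hi2⟩
    have : (0 : ℝ) ≤ (n : ℝ) - ((i : ℝ) - 1) := by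
      have : (i : ℝ) ≤ (n : ℝ) := by exact_mod_cast hi2
      linarith
    rw [max_eq_left this]
    ring
  · intro n hn
    have e1 : y N = ∑ i ∈ Finset.Icc 1 N, ((N : ℝ) - (i : ℝ) + 1) * a i :=
      key N (by omega) le_rfl
    have e2 : y (N - 1) = ∑ i ∈ Finset.Icc 1 N, ((N : ℝ) - (i : ℝ)) * a i := by
      rw [key (N - 1) (by omega) (by omega)]
      rw [Finset.sum_subset (Finset.Icc_subset_Icc_right (by omega : N - 1 ≤ N))]
      · apply Finset.sum_congr rfl
        intro i hi
        have : ((N - 1 : ℕ) : ℝ) = (N : ℝ) - 1 := by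
          have : 1 ≤ N := by omega
          push_cast [this]; ring
        rw [this]; ring
      · intro i hi hni
        have : i = N := by
          rcases Finset.mem_Icc.mp hi with ⟨h1, h2⟩
          by_contra hc
          exact hni (Finset.mem_Icc.mpr ⟨h1, by omega⟩)
        rw [this, Nat.cast_sub (by omega : 1 ≤ N)]
        push_cast
        ring
    show (∑ i ∈ Finset.Icc 1 N, a i * max ((n : ℝ) - ((i : ℝ) - 1)) 0)
        = ((n : ℝ) - (N : ℝ) + 1) * y N - ((n : ℝ) - (N : ℝ)) * y (N - 1)
    rw [e1, e2, Finset.mul_sum, Finset.mul_sum, ← Finset.sum_sub_distrib]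
    apply Finset.sum_congr rfl
    intro i hi
    rcases Finset.mem_Icc.mp hi with ⟨hi1, hi2⟩
    have : (0 : ℝ) ≤ (n : ℝ) - ((i : ℝ) - 1) := by
      have : (i : ℝ) ≤ (n : ℝ) := by exact_mod_cast (by omega : i ≤ n)
      linarith
    rw [max_eq_left this]
    ring
end

section
/- Let C be a finite set and let graphs carry node features in C. Define d-patterns recursively: the 0-pattern of a node v is its feature c_v ∈ C; for d > 0, the d-pattern of v is the pair consisting of the (d−1)-pattern of v and the multiset of (d−1)-patterns of the neighbors of v. Let two nodes v (in graph G) and v' (in graph G') have equal d-patterns. Then for any choice of parameters W₁⁽ᵗ⁾, W₂⁽ᵗ⁾, b⁽ᵗ⁾ (t = 1, …, d) and any activation function σ, the message-passing network defined by h_v⁽⁰⁾ = embedding of c_v and h_v⁽ᵗ⁾ = σ(W₂⁽ᵗ⁾ h_v⁽ᵗ⁻¹⁾ + Σ_{u ∈ N(v)} W₁⁽ᵗ⁾ h_u⁽ᵗ⁻¹⁾ + b⁽ᵗ⁾) satisfies h_v⁽ᵈ⁾ = h_{v'}⁽ᵈ⁾. -/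
/-- The type of `d`-patterns over a feature set `C`: a `0`-pattern is a feature,
and a `(d+1)`-pattern is a `d`-pattern together with a multiset of `d`-patterns. -/
def PatternT (C : Type) : ℕ → Type
  | 0 => C
  | d + 1 => PatternT C d × Multiset (PatternT C d)

/-- The `d`-pattern of a node `v`: its feature for `d = 0`; for `d+1`, its
`d`-pattern together with the multiset of `d`-patterns of its neighbors. -/
def nodePattern {V C : Type} (G : SimpleGraph V) [Fintype V] [DecidableRel G.Adj]
    (feat : V → C) : (d : ℕ) → V → PatternT C d
  | 0, v => feat v
  | d + 1, v =>
    (nodePattern G feat d v, (G.neighborFinset v).val.map (nodePattern G feat d))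

/-- The node features of a `d`-layer message-passing GNN:
`h_v⁽⁰⁾ = emb (feat v)` and
`h_v⁽ᵗ⁺¹⁾ = σ (W₂⁽ᵗ⁾ h_v⁽ᵗ⁾ + Σ_{u ∈ N(v)} W₁⁽ᵗ⁾ h_u⁽ᵗ⁾ + b⁽ᵗ⁾)`
with `σ` applied entrywise. -/
def gnn {V C : Type} (G : SimpleGraph V) [Fintype V] [DecidableRel G.Adj]
    (feat : V → C) (dim : ℕ → ℕ)
    (W₁ W₂ : (t : ℕ) → Matrix (Fin (dim (t + 1))) (Fin (dim t)) ℝ)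
    (b : (t : ℕ) → Fin (dim (t + 1)) → ℝ) (σ : ℝ → ℝ)
    (emb : C → Fin (dim 0) → ℝ) : (d : ℕ) → V → Fin (dim d) → ℝ
  | 0, v => emb (feat v)
  | t + 1, v => fun i =>
    σ ((W₂ t).mulVec (gnn G feat dim W₁ W₂ b σ emb t v) i
      + (∑ u ∈ G.neighborFinset v, (W₁ t).mulVec (gnn G feat dim W₁ W₂ b σ emb t u) i)
      + b t i)

/-- Any `d`-layer message-passing GNN is constant on nodes with equal
`d`-patterns: if nodes `v` (in `G`) and `v'` (in `G'`) have equal `d`-patterns,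
then their `d`-th layer GNN features coincide, for any weights, biases,
activation and feature embedding. -/
theorem stmt_10 {V V' C : Type} (G : SimpleGraph V) (G' : SimpleGraph V')
    [Fintype V] [Fintype V'] [DecidableRel G.Adj] [DecidableRel G'.Adj]
    (feat : V → C) (feat' : V' → C) (dim : ℕ → ℕ)
    (W₁ W₂ : (t : ℕ) → Matrix (Fin (dim (t + 1))) (Fin (dim t)) ℝ)
    (b : (t : ℕ) → Fin (dim (t + 1)) → ℝ) (σ : ℝ → ℝ)
    (emb : C → Fin (dim 0) → ℝ) (d : ℕ) (v : V) (v' : V')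
    (h : nodePattern G feat d v = nodePattern G' feat' d v') :
    gnn G feat dim W₁ W₂ b σ emb d v = gnn G' feat' dim W₁ W₂ b σ emb d v' := by
  induction d generalizing v v' with
  | zero =>
    simp only [nodePattern] at h
    simp [gnn, h]
  | succ d ih =>
    simp only [nodePattern] at h
    have h1 : nodePattern G feat d v = nodePattern G' feat' d v' :=
      congrArg Prod.fst h
    have h2 : (G.neighborFinset v).val.map (nodePattern G feat d)
        = (G'.neighborFinset v').val.map (nodePattern G' feat' d) :=
      congrArg Prod.snd h
    have hgv := ih v v' h1
    have hm : (G.neighborFinset v).val.map (gnn G feat dim W₁ W₂ b σ emb d)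
        = (G'.neighborFinset v').val.map (gnn G' feat' dim W₁ W₂ b σ emb d) := by
      rw [← Multiset.rel_eq] at h2 ⊢
      rw [Multiset.rel_map] at h2 ⊢
      exact h2.mono fun a _ b _ hab => ih a b hab
    funext i
    simp only [gnn]
    have hsum : ∑ u ∈ G.neighborFinset v, (W₁ d).mulVec (gnn G feat dim W₁ W₂ b σ emb d u) i
        = ∑ u ∈ G'.neighborFinset v', (W₁ d).mulVec (gnn G' feat' dim W₁ W₂ b σ emb d u) i := by
      rw [Finset.sum, Finset.sum]
      have := congrArg (fun s =>
        (Multiset.map (fun x : Fin (dim d) → ℝ => (W₁ d).mulVec x i) s).sum) hm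
      simp only [Multiset.map_map, Function.comp] at this
      exact this
    rw [hgv, hsum]
end

section
/- Let C be a finite set of node features and define d-patterns recursively (the 0-pattern of v is its feature; the d-pattern of v is its (d−1)-pattern together with the multiset of (d−1)-patterns of its neighbors). If two graphs G and G' have equal multisets of d-patterns over their node sets, then for any d-layer message-passing GNN followed by a sum readout g(G) = Σ_{v ∈ V(G)} h_v⁽ᵈ⁾ and any function applied to g, the outputs on G and G' are equal. -/
/-- The GNN output as a function of the pattern alone. -/
def patFun {C : Type} (dim : ℕ → ℕ)
    (W₁ W₂ : (t : ℕ) → Matrix (Fin (dim (t + 1))) (Fin (dim t)) ℝ)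
    (b : (t : ℕ) → Fin (dim (t + 1)) → ℝ) (σ : ℝ → ℝ)
    (emb : C → Fin (dim 0) → ℝ) : (d : ℕ) → PatternT C d → Fin (dim d) → ℝ
  | 0, c => emb c
  | t + 1, p => fun i =>
    σ ((W₂ t).mulVec (patFun dim W₁ W₂ b σ emb t p.1) i
      + (p.2.map (fun q => (W₁ t).mulVec (patFun dim W₁ W₂ b σ emb t q) i)).sum
      + b t i)

lemma gnn_eq_patFun {V C : Type} (G : SimpleGraph V) [Fintype V] [DecidableRel G.Adj]
    (feat : V → C) (dim : ℕ → ℕ)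
    (W₁ W₂ : (t : ℕ) → Matrix (Fin (dim (t + 1))) (Fin (dim t)) ℝ)
    (b : (t : ℕ) → Fin (dim (t + 1)) → ℝ) (σ : ℝ → ℝ)
    (emb : C → Fin (dim 0) → ℝ) : ∀ (d : ℕ) (v : V),
    gnn G feat dim W₁ W₂ b σ emb d v
      = patFun dim W₁ W₂ b σ emb d (nodePattern G feat d v)
  | 0, v => rfl
  | t + 1, v => by
    funext i
    simp only [gnn, patFun, nodePattern, Multiset.map_map, Function.comp]
    rw [gnn_eq_patFun G feat dim W₁ W₂ b σ emb t v, Finset.sum]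
    congr 3
    apply congrArg Multiset.sum
    apply Multiset.map_congr rfl
    intro u _
    rw [gnn_eq_patFun G feat dim W₁ W₂ b σ emb t u]

/-- If two graphs have equal multisets of `d`-patterns over their node sets,
then any `d`-layer message-passing GNN followed by a sum readout
`g(G) = Σ_v h_v⁽ᵈ⁾`, and any further function `φ` applied to the readout,
produce equal outputs on the two graphs. -/
theorem stmt_11 {V V' C : Type} (G : SimpleGraph V) (G' : SimpleGraph V')
    [Fintype V] [Fintype V'] [DecidableRel G.Adj] [DecidableRel G'.Adj]
    (feat : V → C) (feat' : V' → C) (dim : ℕ → ℕ)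
    (W₁ W₂ : (t : ℕ) → Matrix (Fin (dim (t + 1))) (Fin (dim t)) ℝ)
    (b : (t : ℕ) → Fin (dim (t + 1)) → ℝ) (σ : ℝ → ℝ)
    (emb : C → Fin (dim 0) → ℝ) (d : ℕ)
    (h : (Finset.univ.val.map (nodePattern G feat d))
        = (Finset.univ.val.map (nodePattern G' feat' d)))
    {α : Type} (φ : (Fin (dim d) → ℝ) → α) :
    φ (∑ v : V, gnn G feat dim W₁ W₂ b σ emb d v)
      = φ (∑ v' : V', gnn G' feat' dim W₁ W₂ b σ emb d v') := by
  congr 1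
  have key : ∀ (W : Type) (inst : Fintype W) (H : SimpleGraph W)
      (instA : DecidableRel H.Adj) (f : W → C),
      (∑ v : W, gnn H f dim W₁ W₂ b σ emb d v)
        = ((Finset.univ.val.map (nodePattern H f d)).map
            (patFun dim W₁ W₂ b σ emb d)).sum := by
    intro W _ H _ f
    rw [Finset.sum, Multiset.map_map]
    apply congrArg
    apply Multiset.map_congr rfl
    intro v _
    exact gnn_eq_patFun H f dim W₁ W₂ b σ emb d v
  rw [key V _ G _ feat, key V' _ G' _ feat', h]
end
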